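/- arXiv:1601.00810 — 3 statements merged into one kernel-verified Lean document; each statement's English description precedes it below -/
import Mathlib

section
/- For α > 0, λ ≥ 0, and p > λ^{1/α}, the Laplace transform of t ↦ t^{α−1} E_{α,α}(−λ t^α) evaluated at p equals 1/(p^α + λ); that is, ∫_0^∞ e^{−pt} t^{α−1} E_{α,α}(−λ t^α) dt = 1/(p^α + λ). -/
open MeasureTheory Real

noncomputable def mittagLefflerReal (α β t : ℝ) : ℝ :=
  ∑' n : ℕ, t ^ n / Real.Gamma (α * n + β)

/-- For `α > 0`, `λ ≥ 0` and `p > λ^(1/α)`, the Laplace transform of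
`t ↦ t^(α-1) E_{α,α}(-λ t^α)` at `p` is `1 / (p^α + λ)`. -/
theorem laplace_mittagLeffler (α lam p : ℝ) (hα : 0 < α) (hlam : 0 ≤ lam)
    (hp : lam ^ (1 / α) < p) :
    ∫ t in Set.Ioi (0 : ℝ),
        Real.exp (-p * t) * (t ^ (α - 1) * mittagLefflerReal α α (-lam * t ^ α))
      = 1 / (p ^ α + lam) := by
  have hp0 : 0 < p := lt_of_le_of_lt (Real.rpow_nonneg hlam _) hp
  have hpα : 0 < p ^ α := Real.rpow_pos_of_pos hp0 α
  have hlt : lam < p ^ α := by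
    have h1 : (lam ^ (1 / α)) ^ α < p ^ α :=
      Real.rpow_lt_rpow (Real.rpow_nonneg hlam _) hp hα
    rwa [← Real.rpow_mul hlam, one_div, inv_mul_cancel₀ hα.ne', Real.rpow_one] at h1
  set x : ℝ := lam / p ^ α with hxdef
  have hx0 : 0 ≤ x := div_nonneg hlam hpα.le
  have hx1 : x < 1 := (div_lt_one hpα).mpr hlt
  -- the summands
  set F : ℕ → ℝ → ℝ := fun n t =>
    Real.exp (-p * t) * (t ^ (α - 1) * ((-lam * t ^ α) ^ n / Real.Gamma (α * n + α))) with hF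
  set g : ℕ → ℝ → ℝ := fun n t =>
    (-lam) ^ n / Real.Gamma (α * (n + 1)) * (t ^ (α * (n + 1) - 1) * Real.exp (-(p * t))) with hg
  have hΓpos : ∀ n : ℕ, 0 < Real.Gamma (α * (n + 1)) := by
    intro n
    apply Real.Gamma_pos_of_pos
    positivity
  have hsn : ∀ n : ℕ, (0:ℝ) < α * (n + 1) := by intro n; positivity
  have heq : ∀ n : ℕ, ∀ t ∈ Set.Ioi (0:ℝ), F n t = g n t := by
    intro n t ht
    have ht0 : (0:ℝ) < t := ht
    have h1 : (-lam * t ^ α) ^ n = (-lam) ^ n * t ^ (α * n) := by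
      rw [mul_pow, ← Real.rpow_natCast (t ^ α) n, ← Real.rpow_mul ht0.le]
    have h2 : t ^ (α - 1) * t ^ (α * n) = t ^ (α * (n + 1) - 1) := by
      rw [← Real.rpow_add ht0]; ring_nf
    have h3 : α * (n:ℝ) + α = α * (n + 1) := by ring
    simp only [hF, hg, h1, h3]
    rw [← h2, neg_mul]; ring
  have hbase_int : ∀ n : ℕ, IntegrableOn
      (fun t : ℝ => t ^ (α * (n + 1) - 1) * Real.exp (-(p * t))) (Set.Ioi 0) := by
    intro n
    have := integrableOn_rpow_mul_exp_neg_mul_rpow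
      (show (-1:ℝ) < α * (n + 1) - 1 by have := hsn n; linarith) (p := 1) one_pos hp0
    refine this.congr_fun (fun t ht => ?_) measurableSet_Ioi
    beta_reduce; rw [Real.rpow_one, neg_mul]
  have hgint : ∀ n : ℕ, IntegrableOn (g n) (Set.Ioi 0) := fun n => (hbase_int n).const_mul _
  have hFint : ∀ n : ℕ, IntegrableOn (F n) (Set.Ioi 0) := by
    intro n
    exact (hgint n).congr_fun (fun t ht => (heq n t ht).symm) measurableSet_Ioi
  have hbase_val : ∀ n : ℕ,
      ∫ t in Set.Ioi (0:ℝ), t ^ (α * (n + 1) - 1) * Real.exp (-(p * t))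
        = (1 / p) ^ (α * (n + 1)) * Real.Gamma (α * (n + 1)) :=
    fun n => Real.integral_rpow_mul_exp_neg_mul_Ioi (hsn n) hp0
  have hpow : ∀ n : ℕ, (1 / p) ^ (α * ((n:ℝ) + 1)) = ((p ^ α)⁻¹) ^ (n + 1) := by
    intro n
    rw [show ((p ^ α)⁻¹ : ℝ) = (1/p) ^ α by rw [one_div, Real.inv_rpow hp0.le],
      ← Real.rpow_natCast ((1/p) ^ α) (n+1), ← Real.rpow_mul (by positivity : (0:ℝ) ≤ 1/p)]
    congr 1
    push_cast
    ring
  have hFval : ∀ n : ℕ, ∫ t in Set.Ioi (0:ℝ), F n t = (-x) ^ n / p ^ α := by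
    intro n
    rw [setIntegral_congr_fun measurableSet_Ioi (heq n)]
    simp only [hg]
    rw [integral_const_mul, hbase_val n, hpow n, hxdef, ← neg_div, div_pow, div_div]
    rw [pow_succ, inv_pow]
    field_simp
  have hnorm_val : ∀ n : ℕ, ∫ t in Set.Ioi (0:ℝ), ‖F n t‖ = x ^ n / p ^ α := by
    intro n
    have : ∀ t ∈ Set.Ioi (0:ℝ), ‖F n t‖
        = lam ^ n / Real.Gamma (α * (n + 1)) * (t ^ (α * (n + 1) - 1) * Real.exp (-(p * t))) := by
      intro t ht
      rw [heq n t ht]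
      have ht0 : (0:ℝ) < t := ht
      rw [Real.norm_eq_abs, abs_mul, abs_div, abs_pow, abs_neg, abs_of_nonneg hlam,
        abs_of_pos (hΓpos n), abs_mul, abs_of_nonneg (Real.rpow_nonneg ht0.le _),
        abs_of_pos (Real.exp_pos _)]
    rw [setIntegral_congr_fun measurableSet_Ioi this, integral_const_mul, hbase_val n, hpow n,
      hxdef, div_pow, div_div]
    rw [pow_succ, inv_pow]
    field_simp
  have hsum_norm : Summable fun n : ℕ => ∫ t in Set.Ioi (0:ℝ), ‖F n t‖ := by
    simp only [hnorm_val]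
    exact (summable_geometric_of_lt_one hx0 hx1).div_const _
  have hswap := MeasureTheory.integral_tsum_of_summable_integral_norm
    (F := F) (μ := volume.restrict (Set.Ioi 0)) hFint hsum_norm
  have hpt : ∀ t : ℝ, Real.exp (-p * t) * (t ^ (α - 1) * mittagLefflerReal α α (-lam * t ^ α))
      = ∑' n : ℕ, F n t := by
    intro t
    simp only [hF, mittagLefflerReal]
    rw [tsum_mul_left, tsum_mul_left]
  calc ∫ t in Set.Ioi (0:ℝ),
        Real.exp (-p * t) * (t ^ (α - 1) * mittagLefflerReal α α (-lam * t ^ α))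
      = ∫ t in Set.Ioi (0:ℝ), ∑' n : ℕ, F n t := by simp only [hpt]
    _ = ∑' n : ℕ, ∫ t in Set.Ioi (0:ℝ), F n t := hswap.symm
    _ = ∑' n : ℕ, (-x) ^ n / p ^ α := by simp only [hFval]
    _ = (∑' n : ℕ, (-x) ^ n) / p ^ α := by rw [tsum_div_const]
    _ = (1 - -x)⁻¹ / p ^ α := by
        rw [tsum_geometric_of_norm_lt_one (by rwa [norm_neg, Real.norm_eq_abs, abs_of_nonneg hx0])]
    _ = 1 / (p ^ α + lam) := by
        rw [hxdef]; field_simp; rw [sub_neg_eq_add, div_self (add_pos_of_pos_of_nonneg hpα hlam).ne']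
end

section
/- For α ∈ (0,2), λ > 0, and p > λ^{1/α}, the Laplace transform of t ↦ t^{α+1} E_{α,α}(−λ t^α) at p equals p^{α−2}·(2α² p^α − α(α−1)(p^α + λ))/(p^α + λ)³. -/
open MeasureTheory Real

private lemma integrableOn_aux {s b : ℝ} (hs : -1 < s) (hb : 0 < b) :
    MeasureTheory.IntegrableOn (fun x : ℝ => x ^ s * Real.exp (-(b * x))) (Set.Ioi 0) := by
  have h := integrableOn_rpow_mul_exp_neg_mul_rpow hs one_pos hb
  simpa [Real.rpow_one, neg_mul] using h

private lemma hasSum_aux (α : ℝ) {x : ℝ} (hx : |x| < 1) :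
    HasSum (fun n : ℕ => (α * n + α) * (α * n + α + 1) * x ^ n)
      (2 * α ^ 2 * (1 / (1 - x) ^ 3) + (α - α ^ 2) * (1 / (1 - x) ^ 2)) := by
  have hx' : ‖x‖ < 1 := by simpa [Real.norm_eq_abs] using hx
  have h2 := (hasSum_choose_mul_geometric_of_norm_lt_one 2 hx').mul_left (2 * α ^ 2)
  have h1 := (hasSum_choose_mul_geometric_of_norm_lt_one 1 hx').mul_left (α - α ^ 2)
  have h := h2.add h1
  convert h using 1
  · rfl
  · funext n
    have hc2 : (((n + 2).choose 2 : ℕ) : ℝ) = (n + 2) * (n + 1) / 2 := by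
      rw [Nat.cast_choose_two]; push_cast; ring
    have hc1 : (((n + 1).choose 1 : ℕ) : ℝ) = (n + 1) := by
      rw [Nat.choose_one_right]; push_cast; ring
    rw [hc2, hc1]; ring

/-- For `α ∈ (0,2)`, `λ > 0` and `p > λ^(1/α)`, the Laplace transform of
`t ↦ t^(α+1) E_{α,α}(-λ t^α)` at `p` equals
`p^(α-2) (2α² p^α - α(α-1)(p^α+λ)) / (p^α+λ)³`. -/
theorem laplace_mittagLeffler_deriv (α lam p : ℝ) (hα : 0 < α) (hα2 : α < 2)
    (hlam : 0 < lam) (hp : lam ^ (1 / α) < p) :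
    ∫ t in Set.Ioi (0 : ℝ),
        Real.exp (-p * t) * (t ^ (α + 1) * mittagLefflerReal α α (-lam * t ^ α))
      = p ^ (α - 2) *
        ((2 * α ^ 2 * p ^ α - α * (α - 1) * (p ^ α + lam)) / (p ^ α + lam) ^ 3) := by
  have hp0 : 0 < p := lt_trans (Real.rpow_pos_of_pos hlam _) hp
  have hα' : α ≠ 0 := ne_of_gt hα
  have hA : (0 : ℝ) < p ^ α := Real.rpow_pos_of_pos hp0 α
  have hlA : lam < p ^ α := by
    have h := Real.rpow_lt_rpow (le_of_lt (Real.rpow_pos_of_pos hlam _)) hp hα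
    rwa [← Real.rpow_mul hlam.le, one_div, inv_mul_cancel₀ hα', Real.rpow_one] at h
  set q : ℝ := lam * (1 / p) ^ α with hqdef
  have hq' : q = lam / p ^ α := by
    rw [hqdef, one_div, Real.inv_rpow hp0.le, div_eq_mul_inv]
  have hqpos : 0 < q := by rw [hq']; positivity
  have hq1 : |q| < 1 := by
    rw [abs_of_pos hqpos, hq']; exact (div_lt_one hA).2 hlA
  set x : ℝ := -q with hxdef
  have hx1 : |x| < 1 := by rwa [hxdef, abs_neg]
  set g : ℕ → ℝ → ℝ := fun n t =>
    ((-lam) ^ n / Real.Gamma (α * n + α)) * (t ^ (α * n + α + 2 - 1) * Real.exp (-(p * t)))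
    with hgdef
  have hΓpos : ∀ n : ℕ, 0 < Real.Gamma (α * n + α) := fun n =>
    Real.Gamma_pos_of_pos (by positivity)
  have hΓ : ∀ n : ℕ, Real.Gamma (α * n + α + 2)
      = (α * n + α + 1) * ((α * n + α) * Real.Gamma (α * n + α)) := by
    intro n
    have h0 : (0 : ℝ) < α * n + α := by positivity
    rw [show α * (n : ℝ) + α + 2 = (α * n + α + 1) + 1 by ring,
      Real.Gamma_add_one (by positivity),
      show α * (n : ℝ) + α + 1 = (α * n + α) + 1 by ring,
      Real.Gamma_add_one (ne_of_gt h0)]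
  have hpow : ∀ n : ℕ, ((1 : ℝ) / p) ^ (α * n + α + 2)
      = (1 / p) ^ (α + 2) * ((1 / p) ^ α) ^ n := by
    intro n
    rw [show α * (n : ℝ) + α + 2 = α * n + (α + 2) by ring,
      Real.rpow_add (by positivity), ← Real.rpow_natCast ((1 / p) ^ α) n,
      ← Real.rpow_mul (by positivity)]
    ring
  have hepos : ∀ n : ℕ, (-1 : ℝ) < α * n + α + 2 - 1 := by
    intro n
    have h1 : (0 : ℝ) ≤ α * n := by positivity
    linarith
  have hint : ∀ n : ℕ, IntegrableOn (g n) (Set.Ioi 0) := by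
    intro n
    exact (integrableOn_aux (hepos n) hp0).const_mul _
  have hIbase : ∀ n : ℕ, ∫ t in Set.Ioi (0 : ℝ), t ^ (α * n + α + 2 - 1) * Real.exp (-(p * t))
      = (1 / p) ^ (α * n + α + 2) * Real.Gamma (α * n + α + 2) := fun n =>
    integral_rpow_mul_exp_neg_mul_Ioi (by positivity) hp0
  have hS : ∀ n : ℕ, ∫ t in Set.Ioi (0 : ℝ), ‖g n t‖
      = (1 / p) ^ (α + 2) * ((α * n + α) * (α * n + α + 1) * q ^ n) := by
    intro n
    have heq : Set.EqOn (fun t => ‖g n t‖)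
        (fun t => (lam ^ n / Real.Gamma (α * n + α)) *
          (t ^ (α * n + α + 2 - 1) * Real.exp (-(p * t)))) (Set.Ioi 0) := by
      intro t ht
      have ht0 : (0 : ℝ) < t := ht
      simp only [hgdef, Real.norm_eq_abs, abs_mul, abs_div, abs_pow, abs_neg,
        abs_of_pos hlam, abs_of_pos (hΓpos n), abs_of_pos (Real.rpow_pos_of_pos ht0 _),
        abs_of_pos (Real.exp_pos _)]
    rw [setIntegral_congr_fun measurableSet_Ioi heq, MeasureTheory.integral_const_mul,
      hIbase n, hΓ n, hpow n, hqdef]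
    rw [mul_pow]
    field_simp
  have hsum : Summable fun n : ℕ => ∫ t in Set.Ioi (0 : ℝ), ‖g n t‖ := by
    have h := ((hasSum_aux α hq1).summable.mul_left ((1 / p) ^ (α + 2)))
    refine h.congr fun n => ?_
    rw [hS n]
  have key : Set.EqOn
      (fun t => Real.exp (-p * t) * (t ^ (α + 1) * mittagLefflerReal α α (-lam * t ^ α)))
      (fun t => ∑' n, g n t) (Set.Ioi 0) := by
    intro t ht
    have ht0 : (0 : ℝ) < t := ht
    simp only [mittagLefflerReal]
    rw [← tsum_mul_left, ← tsum_mul_left]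
    refine tsum_congr fun n => ?_
    have h1 : (-lam * t ^ α) ^ n = (-lam) ^ n * t ^ (α * n) := by
      rw [mul_pow, ← Real.rpow_natCast (t ^ α) n, ← Real.rpow_mul ht0.le]
    have h2 : t ^ (α + 1) * t ^ (α * n) = t ^ (α * n + α + 2 - 1) := by
      rw [← Real.rpow_add ht0]; ring_nf
    simp only [hgdef]
    rw [h1, ← h2, show -p * t = -(p * t) from neg_mul p t]
    ring
  rw [setIntegral_congr_fun measurableSet_Ioi key,
    ← integral_tsum_of_summable_integral_norm hint hsum]
  have hIg : ∀ n : ℕ, ∫ t in Set.Ioi (0 : ℝ), g n t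
      = (1 / p) ^ (α + 2) * ((α * n + α) * (α * n + α + 1) * x ^ n) := by
    intro n
    simp only [hgdef]
    rw [MeasureTheory.integral_const_mul, hIbase n, hΓ n, hpow n]
    have hx : x ^ n = (-lam) ^ n * ((1 / p) ^ α) ^ n := by
      rw [hxdef, hqdef, ← neg_mul, mul_pow]
    rw [hx]
    field_simp
  rw [tsum_congr hIg, tsum_mul_left, (hasSum_aux α hx1).tsum_eq]
  have h1x : 1 - x = (p ^ α + lam) / p ^ α := by
    rw [hxdef, sub_neg_eq_add, hq']
    field_simp
  have hC : (1 / p) ^ (α + 2 : ℝ) = 1 / (p ^ α * p ^ 2) := by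
    rw [one_div, Real.inv_rpow hp0.le, Real.rpow_add hp0,
      show (2 : ℝ) = ((2 : ℕ) : ℝ) by norm_num, Real.rpow_natCast, one_div]
  have hP : p ^ (α - 2 : ℝ) = p ^ α * (p ^ 2)⁻¹ := by
    rw [show α - 2 = α + (-2 : ℝ) by ring, Real.rpow_add hp0]
    congr 1
    rw [show (-2 : ℝ) = -((2 : ℕ) : ℝ) by norm_num, Real.rpow_neg hp0.le, Real.rpow_natCast]
  rw [h1x, hC, hP]
  have hAl : (0 : ℝ) < p ^ α + lam := by positivity
  field_simp
  ring
end

section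
/- Let α ∈ (0,1), γ ∈ (0,1), and (λ_n) positive nondecreasing unbounded with orthonormal eigenbasis (φ_n). Define S(t)h = t^{α−1} Σ_n E_{α,α}(−λ_n t^α)⟨h,φ_n⟩φ_n. Then there is C > 0 such that Σ_n λ_n^{2γ} (t^{α−1} E_{α,α}(−λ_n t^α))² |⟨h,φ_n⟩|² ≤ C t^{−2(1−α(1−γ))} ‖h‖² for all t > 0 and h. -/
open Filter

lemma pointwise_bound (α γ c : ℝ) (hα : 0 < α) (hα1 : α < 1)
    (hγ : 0 < γ) (hγ1 : γ < 1) (hc : 0 < c)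
    (hML : ∀ s : ℝ, 0 ≤ s → |mittagLefflerReal α α (-s)| ≤ c / (1 + s ^ 2))
    (t lam : ℝ) (ht : 0 < t) (hl : 0 < lam) :
    lam ^ (2 * γ) * (t ^ (α - 1) * mittagLefflerReal α α (-lam * t ^ α)) ^ 2
      ≤ c ^ 2 * t ^ (-2 * (1 - α * (1 - γ))) := by
  set s : ℝ := lam * t ^ α with hs_def
  have hta : (0:ℝ) < t ^ α := Real.rpow_pos_of_pos ht α
  have hs : 0 < s := mul_pos hl hta
  have hden : (0:ℝ) < 1 + s ^ 2 := by positivity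
  have hE : |mittagLefflerReal α α (-s)| ≤ c / (1 + s ^ 2) := hML s hs.le
  have hE2 : (mittagLefflerReal α α (-s)) ^ 2 ≤ (c / (1 + s ^ 2)) ^ 2 := by
    rw [← sq_abs]
    exact pow_le_pow_left₀ (abs_nonneg _) hE 2
  -- s^(2γ) ≤ (1+s²)²
  have hkey : s ^ (2 * γ) ≤ (1 + s ^ 2) ^ 2 := by
    have h1 : s ^ (2 * γ) = (s ^ 2) ^ γ := by
      rw [← Real.rpow_natCast s 2, ← Real.rpow_mul hs.le]
      norm_num
    have h2 : (s ^ 2 : ℝ) ^ γ ≤ (1 + s ^ 2) ^ γ :=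
      Real.rpow_le_rpow (by positivity) (by linarith) hγ.le
    have h3 : (1 + s ^ 2 : ℝ) ^ γ ≤ (1 + s ^ 2) ^ (1:ℝ) :=
      Real.rpow_le_rpow_of_exponent_le (by nlinarith [sq_nonneg s]) (by linarith)
    have h4 : (1 + s ^ 2 : ℝ) ^ (1:ℝ) = 1 + s ^ 2 := Real.rpow_one _
    calc s ^ (2 * γ) = (s ^ 2) ^ γ := h1
      _ ≤ (1 + s ^ 2) ^ γ := h2
      _ ≤ (1 + s ^ 2) ^ (1:ℝ) := h3
      _ = 1 + s ^ 2 := h4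
      _ ≤ (1 + s ^ 2) ^ 2 := by nlinarith [sq_nonneg s]
  -- lam ^(2γ) = s^(2γ) * (t^α)^(-(2γ))
  have hl_eq : lam = s / t ^ α := eq_div_of_mul_eq hta.ne' hs_def.symm
  have hlam_rw : lam ^ (2 * γ) = s ^ (2 * γ) * (t ^ α) ^ (-(2 * γ)) := by
    rw [hl_eq, Real.div_rpow hs.le hta.le, Real.rpow_neg hta.le, div_eq_mul_inv]
  have hratio : s ^ (2 * γ) * (c / (1 + s ^ 2)) ^ 2 ≤ c ^ 2 := by
    rw [div_pow]
    rw [mul_div_assoc']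
    rw [div_le_iff₀ (by positivity)]
    calc s ^ (2 * γ) * c ^ 2 ≤ (1 + s ^ 2) ^ 2 * c ^ 2 := by
          apply mul_le_mul_of_nonneg_right hkey (by positivity)
      _ = c ^ 2 * (1 + s ^ 2) ^ 2 := by ring
  -- power rewriting
  have hp1 : (t ^ (α - 1)) ^ 2 = t ^ ((α - 1) * 2) := by
    rw [← Real.rpow_natCast (t ^ (α - 1)) 2, ← Real.rpow_mul ht.le]
    norm_num
  have hp2 : (t ^ α) ^ (-(2 * γ)) = t ^ (α * (-(2 * γ))) := by
    rw [Real.rpow_mul ht.le]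
  have hp3 : t ^ ((α - 1) * 2) * t ^ (α * (-(2 * γ))) = t ^ (-2 * (1 - α * (1 - γ))) := by
    rw [← Real.rpow_add ht]
    ring_nf
  have hE2' : (t ^ (α - 1) * mittagLefflerReal α α (-s)) ^ 2
      ≤ (t ^ (α - 1)) ^ 2 * (c / (1 + s ^ 2)) ^ 2 := by
    rw [mul_pow]
    exact mul_le_mul_of_nonneg_left hE2 (by positivity)
  have hlam2 : (0:ℝ) ≤ lam ^ (2 * γ) := Real.rpow_nonneg hl.le _
  have hneg : -lam * t ^ α = -s := by rw [hs_def]; ring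
  rw [hneg]
  calc lam ^ (2 * γ) * (t ^ (α - 1) * mittagLefflerReal α α (-s)) ^ 2
      ≤ lam ^ (2 * γ) * ((t ^ (α - 1)) ^ 2 * (c / (1 + s ^ 2)) ^ 2) :=
        mul_le_mul_of_nonneg_left hE2' hlam2
    _ = (t ^ (α - 1)) ^ 2 * (t ^ α) ^ (-(2 * γ)) * (s ^ (2 * γ) * (c / (1 + s ^ 2)) ^ 2) := by
        rw [hlam_rw]; ring
    _ ≤ (t ^ (α - 1)) ^ 2 * (t ^ α) ^ (-(2 * γ)) * c ^ 2 := by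
        apply mul_le_mul_of_nonneg_left hratio
        have := Real.rpow_nonneg hta.le (-(2 * γ))
        positivity
    _ = c ^ 2 * t ^ (-2 * (1 - α * (1 - γ))) := by
        rw [hp1, hp2, hp3]; ring

/-- Smoothing estimate for the solution operator `S(t)`:
`Σ λₙ^(2γ) (t^(α-1) E_{α,α}(-λₙ tᵅ))² |⟨h,φₙ⟩|² ≤ C t^(-2(1-α(1-γ))) ‖h‖²`,
stated in terms of the coefficient sequence `a n = ⟨h, φₙ⟩`. -/
theorem smoothing_estimate_S (α γ c : ℝ) (hα : 0 < α) (hα1 : α < 1)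
    (hγ : 0 < γ) (hγ1 : γ < 1) (hc : 0 < c)
    (hML : ∀ s : ℝ, 0 ≤ s → |mittagLefflerReal α α (-s)| ≤ c / (1 + s ^ 2))
    (lam : ℕ → ℝ) (hlam_pos : ∀ n, 0 < lam n) (hlam_mono : Monotone lam)
    (hlam_top : Tendsto lam atTop atTop) :
    ∃ C > 0, ∀ t : ℝ, 0 < t → ∀ a : ℕ → ℝ, Summable (fun n => (a n) ^ 2) →
      ∑' n, (lam n) ^ (2 * γ) *
          (t ^ (α - 1) * mittagLefflerReal α α (-(lam n) * t ^ α)) ^ 2 * (a n) ^ 2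
        ≤ C * t ^ (-2 * (1 - α * (1 - γ))) * ∑' n, (a n) ^ 2 := by
  refine ⟨c ^ 2, by positivity, ?_⟩
  intro t ht a ha
  set K : ℝ := c ^ 2 * t ^ (-2 * (1 - α * (1 - γ))) with hK
  have hbound : ∀ n, lam n ^ (2 * γ) *
      (t ^ (α - 1) * mittagLefflerReal α α (-(lam n) * t ^ α)) ^ 2 * (a n) ^ 2
      ≤ K * (a n) ^ 2 := fun n =>
    mul_le_mul_of_nonneg_right
      (pointwise_bound α γ c hα hα1 hγ hγ1 hc hML t (lam n) ht (hlam_pos n))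
      (sq_nonneg _)
  have hnonneg : ∀ n, 0 ≤ lam n ^ (2 * γ) *
      (t ^ (α - 1) * mittagLefflerReal α α (-(lam n) * t ^ α)) ^ 2 * (a n) ^ 2 := by
    intro n
    have := (hlam_pos n).le
    positivity
  have hsumR : Summable (fun n => K * (a n) ^ 2) := ha.mul_left K
  have hsumL : Summable (fun n => lam n ^ (2 * γ) *
      (t ^ (α - 1) * mittagLefflerReal α α (-(lam n) * t ^ α)) ^ 2 * (a n) ^ 2) :=
    Summable.of_nonneg_of_le hnonneg hbound hsumR
  calc ∑' n, lam n ^ (2 * γ) *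
        (t ^ (α - 1) * mittagLefflerReal α α (-(lam n) * t ^ α)) ^ 2 * (a n) ^ 2
      ≤ ∑' n, K * (a n) ^ 2 := Summable.tsum_le_tsum hbound hsumL hsumR
    _ = K * ∑' n, (a n) ^ 2 := tsum_mul_left
    _ = c ^ 2 * t ^ (-2 * (1 - α * (1 - γ))) * ∑' n, (a n) ^ 2 := by rw [hK]
end
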